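/- arXiv:0903.4254 — 3 statements merged into one kernel-verified Lean document; each statement's English description precedes it below -/
import Mathlib

section
/- Under the hypotheses Θ₁, Θ₂, Θ₃, Θ₄ > 0, Θ₂Θ₃ − Θ₁Θ₄ > 0, l > 0, ζ_j = (jπ/l)², and Θ₁/ζ₂ ≤ d₁ < Θ₁/ζ₁, with d₂ = d₂crit := (Θ₂Θ₃ − Θ₁Θ₄ + ζ₁d₁Θ₄)/(ζ₁(Θ₁ − ζ₁d₁)): for every j ∈ ℕ with j ≠ 1, det B_j = (Θ₂Θ₃ − Θ₁Θ₄) + ζ_jd₁Θ₄ − ζ_jd₂crit(Θ₁ − ζ_jd₁) > 0. -/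
theorem stmt_9 (Θ₁ Θ₂ Θ₃ Θ₄ d₁ l : ℝ)
    (h1 : Θ₁ > 0) (h2 : Θ₂ > 0) (h3 : Θ₃ > 0) (h4 : Θ₄ > 0)
    (hdet : Θ₂ * Θ₃ - Θ₁ * Θ₄ > 0) (hl : l > 0)
    (hlow : Θ₁ / ((2 * Real.pi / l) ^ 2) ≤ d₁)
    (hup : d₁ < Θ₁ / ((1 * Real.pi / l) ^ 2)) :
    let ζ₁ : ℝ := (1 * Real.pi / l) ^ 2
    let d₂crit : ℝ := (Θ₂ * Θ₃ - Θ₁ * Θ₄ + ζ₁ * d₁ * Θ₄) / (ζ₁ * (Θ₁ - ζ₁ * d₁))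
    ∀ j : ℕ, j ≠ 1 →
      (Θ₂ * Θ₃ - Θ₁ * Θ₄) + ((j * Real.pi / l) ^ 2) * d₁ * Θ₄
        - ((j * Real.pi / l) ^ 2) * d₂crit * (Θ₁ - ((j * Real.pi / l) ^ 2) * d₁) > 0 := by
  intro ζ₁ d₂crit j hj
  have hπ : Real.pi > 0 := Real.pi_pos
  have hζ₁ : 0 < ζ₁ := by simp only [ζ₁]; positivity
  have hζ₂ : (0:ℝ) < (2 * Real.pi / l) ^ 2 := by positivity
  have hd₁ : 0 < d₁ := lt_of_lt_of_le (div_pos h1 hζ₂) hlow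
  have hden : 0 < Θ₁ - ζ₁ * d₁ := by
    nlinarith [(lt_div_iff₀ hζ₁).mp hup]
  have hcrit : 0 < d₂crit :=
    div_pos (by nlinarith [mul_pos (mul_pos hζ₁ hd₁) h4]) (by positivity)
  rcases Nat.lt_or_ge j 2 with h | h
  · interval_cases j
    · simp only [Nat.cast_zero, zero_mul, zero_div]
      nlinarith
    · exact absurd rfl hj
  · have hj2 : (2:ℝ) ≤ (j:ℝ) := by exact_mod_cast h
    have hζj : (2 * Real.pi / l) ^ 2 ≤ ((j:ℝ) * Real.pi / l) ^ 2 := by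
      gcongr
    have hneg : Θ₁ - ((j:ℝ) * Real.pi / l) ^ 2 * d₁ ≤ 0 := by
      have := (div_le_iff₀ hζ₂).mp hlow
      nlinarith
    have hζjpos : 0 < ((j:ℝ) * Real.pi / l) ^ 2 := lt_of_lt_of_le hζ₂ hζj
    nlinarith [mul_nonneg (mul_nonneg hζjpos.le hcrit.le) (neg_nonneg.mpr hneg),
      mul_nonneg (mul_nonneg hζjpos.le hd₁.le) h4.le]
end

section
/- Under the same scheme as above with α, d₁, h, Δt > 0, if N_{j−1}^k, N_j^k, N_{j+1}^k ∈ [0,1], P_j^k ≥ 0, P_j^k + N_j^k > 0, and Δt·α + Δt·2d₁/h² ≤ 1, then N_j^{k+1} ≥ 0. -/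
theorem stmt_15 (α d₁ h Δt Nm N Np P : ℝ)
    (hα : α > 0) (hd : d₁ > 0) (hh : h > 0) (hΔt : Δt > 0)
    (hNm : Nm ∈ Set.Icc (0 : ℝ) 1) (hN : N ∈ Set.Icc (0 : ℝ) 1)
    (hNp : Np ∈ Set.Icc (0 : ℝ) 1)
    (hP : P ≥ 0) (hPN : P + N > 0)
    (hcfl : Δt * α + Δt * (2 * d₁) / h ^ 2 ≤ 1) :
    N + Δt * N * (1 - N - α * P / (P + N))
      + Δt * d₁ * (Nm - 2 * N + Np) / h ^ 2 ≥ 0 := by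
  obtain ⟨hNm0, hNm1⟩ := hNm
  obtain ⟨hN0, hN1⟩ := hN
  obtain ⟨hNp0, hNp1⟩ := hNp
  have hh2 : h ^ 2 > 0 := by positivity
  have hq : α * P / (P + N) ≤ α := by
    rw [div_le_iff₀ hPN]
    nlinarith
  have hq0 : α * P / (P + N) ≥ 0 := by positivity
  have key : Δt * d₁ * (Nm - 2 * N + Np) / h ^ 2 + Δt * (2 * d₁) / h ^ 2 * N
      = Δt * d₁ * (Nm + Np) / h ^ 2 := by ring
  have key2 : Δt * d₁ * (Nm + Np) / h ^ 2 ≥ 0 := by positivity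
  have key3 : (Δt * α + Δt * (2 * d₁) / h ^ 2) * N ≤ N :=
    mul_le_of_le_one_left hN0 hcfl
  nlinarith [mul_nonneg hΔt.le (mul_nonneg hN0 (by nlinarith : (0:ℝ) ≤ 1 - N)),
    mul_le_mul_of_nonneg_left hq (mul_nonneg hΔt.le hN0)]
end

section
/- Consider the explicit predator scheme P_j^{k+1} = P_j^k + Δt·ε·P_j^k·[−(γ + δβP_j^k)/(1 + βP_j^k) + N_j^k/(P_j^k + N_j^k)] + Δt·d₂·(P_{j−1}^k − 2P_j^k + P_{j+1}^k)/h², where ε, β, d₂, h, Δt > 0, 0 < γ ≤ δ, P_{j−1}^k, P_j^k, P_{j+1}^k ≥ 0, N_j^k ≥ 0, and P_j^k + N_j^k > 0. If Δt·εδ + 2Δt·d₂/h² ≤ 1, then P_j^{k+1} ≥ 0. -/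
theorem stmt_16 (ε β γ δ d₂ h Δt Pm P Pp N : ℝ)
    (hε : ε > 0) (hβ : β > 0) (hγ : 0 < γ) (hγδ : γ ≤ δ)
    (hd : d₂ > 0) (hh : h > 0) (hΔt : Δt > 0)
    (hPm : Pm ≥ 0) (hP : P ≥ 0) (hPp : Pp ≥ 0) (hN : N ≥ 0)
    (hPN : P + N > 0)
    (hcfl : Δt * (ε * δ) + 2 * Δt * d₂ / h ^ 2 ≤ 1) :
    P + Δt * ε * P * (-(γ + δ * β * P) / (1 + β * P) + N / (P + N))
      + Δt * d₂ * (Pm - 2 * P + Pp) / h ^ 2 ≥ 0 := by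
  have h1 : (0:ℝ) < 1 + β * P := by nlinarith
  have hb1 : -(γ + δ * β * P) / (1 + β * P) ≥ -δ := by
    rw [ge_iff_le, le_div_iff₀ h1]; nlinarith
  have hb2 : N / (P + N) ≥ 0 := div_nonneg hN (le_of_lt hPN)
  have hbr : -(γ + δ * β * P) / (1 + β * P) + N / (P + N) ≥ -δ := by linarith
  have hh2 : (0:ℝ) < h ^ 2 := by positivity
  have key1 : Δt * ε * P * (-(γ + δ * β * P) / (1 + β * P) + N / (P + N))
      ≥ -(Δt * ε * δ * P) := by
    have hnn : 0 ≤ Δt * ε * P := by positivity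
    have h2 := mul_le_mul_of_nonneg_left hbr hnn
    have e : Δt * ε * P * (-δ) = -(Δt * ε * δ * P) := by ring
    linarith
  have key2 : Δt * d₂ * (Pm - 2 * P + Pp) / h ^ 2 ≥ -(2 * Δt * d₂ / h ^ 2 * P) := by
    have e : Δt * d₂ * (Pm - 2 * P + Pp) / h ^ 2 - (-(2 * Δt * d₂ / h ^ 2 * P))
        = Δt * d₂ * (Pm + Pp) / h ^ 2 := by field_simp; ring
    have := div_nonneg (by positivity : (0:ℝ) ≤ Δt * d₂ * (Pm + Pp)) hh2.le
    linarith
  have hc : (Δt * (ε * δ) + 2 * Δt * d₂ / h ^ 2) * P ≤ P := by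
    nlinarith
  nlinarith
end
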